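/- arXiv:quant-ph/0203104 — 2 statements merged into one kernel-verified Lean document; each statement's English description precedes it below -/
import Mathlib

section
/- If iH₀' = Σ_{m=1}^{ℓ} ε_m h_m and iH₁ = Σ_{m=1}^{ℓ} δ_m y_m in the so(2ℓ+1) basis with all ε_m, δ_m real and nonzero, and if ω_m² ≠ ω₀² for all 1 ≤ m ≤ ℓ-1 (where ω₀ = ε₁, ω_m = ε_{m+1} - ε_m), then the Lie algebra generated by iH₀' and iH₁ contains the element y₁. -/
open Matrix

attribute [local instance 100] LieRing.ofAssociativeRing

/-- The `N×N` standard matrix unit `e_{a,b}` (1-based indices). -/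
noncomputable def e (N a b : ℕ) : Matrix (Fin N) (Fin N) ℂ :=
  Matrix.of fun i j => if (i : ℕ) + 1 = a ∧ (j : ℕ) + 1 = b then 1 else 0

/-- `x_{a,b} = e_{a,b} - e_{b,a}`. -/
noncomputable def X (N a b : ℕ) : Matrix (Fin N) (Fin N) ℂ := e N a b - e N b a

/-- `y_{a,b} = i (e_{a,b} + e_{b,a})`. -/
noncomputable def Y (N a b : ℕ) : Matrix (Fin N) (Fin N) ℂ :=
  Complex.I • (e N a b + e N b a)

/-- Cartan generator of `so(2ℓ+1)`: `h_m = i (e_{m+1,m+1} - e_{m+ℓ+1,m+ℓ+1})`. -/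
noncomputable def hB (l m : ℕ) : Matrix (Fin (2 * l + 1)) (Fin (2 * l + 1)) ℂ :=
  Complex.I • (e (2 * l + 1) (m + 1) (m + 1) - e (2 * l + 1) (m + l + 1) (m + l + 1))

/-- Generators `x_m` of `so(2ℓ+1)`: `x₁ = x_{ε₁}`, `x_{m+1} = x_{ε_m - ε_{m+1}}`. -/
noncomputable def xB (l m : ℕ) : Matrix (Fin (2 * l + 1)) (Fin (2 * l + 1)) ℂ :=
  if m = 1 then X (2 * l + 1) 1 2 - X (2 * l + 1) (l + 2) 1
  else X (2 * l + 1) (m + 1) m - X (2 * l + 1) (m + l) (m + l + 1)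

/-- Generators `y_m` of `so(2ℓ+1)`: `y₁ = y_{ε₁}`, `y_{m+1} = y_{ε_m - ε_{m+1}}`. -/
noncomputable def yB (l m : ℕ) : Matrix (Fin (2 * l + 1)) (Fin (2 * l + 1)) ℂ :=
  if m = 1 then Y (2 * l + 1) 1 2 - Y (2 * l + 1) (l + 2) 1
  else Y (2 * l + 1) (m + 1) m - Y (2 * l + 1) (m + l) (m + l + 1)

/-- `ω₀ = ε₁`, `ω_m = ε_{m+1} - ε_m` for `m ≥ 1`. -/
noncomputable def w (ε : ℕ → ℝ) (m : ℕ) : ℝ :=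
  if m = 0 then ε 1 else ε (m + 1) - ε m

/-! In the standard basis `iH₀'` is the diagonal matrix `i·diag(0, ε₁, …, ε_ℓ, -ε₁, …, -ε_ℓ)`, so
each `y_m` is an eigenvector of `(ad iH₀')²` with eigenvalue `-ω_{m-1}²`. The generated Lie algebra
contains `iH₁ = Σ δ_m y_m` and is stable under `(ad iH₀')²`, hence under `p((ad iH₀')²)` for every
real polynomial `p`. Taking `p = ∏_{m ≥ 2} (X + ω_{m-1}²)` kills every `y_m` with `m ≥ 2` and leaves
`δ₁ ∏_{m ≥ 2} (ω_{m-1}² - ω₀²) y₁`, a nonzero multiple of `y₁`. -/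

open Complex Polynomial

theorem Submodule.mem_of_sum_eigenvectors_mem {ι K V : Type*} [Field K] [AddCommGroup V]
    [Module K V] {f : Module.End K V} {q : Submodule K V} (hq : q ≤ q.comap f)
    {s : Finset ι} {c : ι → K} {v : ι → V} (hv : ∀ i ∈ s, f (v i) = c i • v i)
    {i₀ : ι} (hi₀ : i₀ ∈ s) (hc : ∀ i ∈ s, i ≠ i₀ → c i ≠ c i₀) (hsum : ∑ i ∈ s, v i ∈ q) :
    v i₀ ∈ q := by
  classical
  set p : K[X] := ∏ j ∈ s.erase i₀, (Polynomial.X - C (c j))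
  have hp_root : ∀ i ∈ s, i ≠ i₀ → p.eval (c i) = 0 := fun i hi hne => by
    rw [eval_prod]
    exact Finset.prod_eq_zero (Finset.mem_erase.2 ⟨hne, hi⟩) (by simp)
  have hp_ne : p.eval (c i₀) ≠ 0 := by
    rw [eval_prod]
    refine Finset.prod_ne_zero_iff.2 fun j hj => ?_
    simpa [sub_eq_zero] using (hc j (Finset.mem_of_mem_erase hj) (Finset.ne_of_mem_erase hj)).symm
  have hp_sum : aeval f p (∑ i ∈ s, v i) = p.eval (c i₀) • v i₀ := by
    rw [map_sum, Finset.sum_eq_single i₀]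
    · exact Module.End.aeval_apply_of_mem_apply_eq_smul (hv i₀ hi₀)
    · intro i hi hne
      rw [Module.End.aeval_apply_of_mem_apply_eq_smul (hv i hi), hp_root i hi hne, zero_smul]
    · exact fun h => absurd hi₀ h
  rw [← q.smul_mem_iff hp_ne, ← hp_sum]
  exact aeval_apply_smul_mem_of_le_comap hsum p f hq

lemma lie_diagonal_e {N : ℕ} (f : ℕ → ℂ) (a b : ℕ) :
    ⁅diagonal (fun i : Fin N => f i), e N a b⁆ = (f (a - 1) - f (b - 1)) • e N a b := by
  ext i j
  simp only [Ring.lie_def, Matrix.sub_apply, diagonal_mul, mul_diagonal, Matrix.smul_apply, e,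
    of_apply, smul_eq_mul]
  split_ifs with h
  · obtain ⟨rfl, rfl⟩ := h
    simp
  · simp

lemma lie_diagonal_lie_diagonal_Y {N : ℕ} (ν : ℕ → ℝ) (a b : ℕ) :
    ⁅diagonal (fun i : Fin N => I * ν i), ⁅diagonal (fun i : Fin N => I * ν i), Y N a b⁆⁆ =
      (-(ν (a - 1) - ν (b - 1)) ^ 2 : ℝ) • Y N a b := by
  simp only [Y, lie_smul, lie_add, lie_diagonal_e (fun i => I * ν i), smul_add, smul_smul,
    ← Complex.coe_smul]
  congr 2 <;> (push_cast; linear_combination ((ν (a - 1) : ℂ) - ν (b - 1)) ^ 2 * I * I_sq)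

-- Indexed by the 0-based row `i`: the diagonal entry of `iH₀'` in row `i` is `I * weight l ε i`.
def weight (l : ℕ) (ε : ℕ → ℝ) (i : ℕ) : ℝ :=
  ∑ m ∈ Finset.Icc 1 l, ε m * ((if i = m then 1 else 0) - if i = m + l then 1 else 0)

lemma sum_smul_hB_eq_diagonal (l : ℕ) (ε : ℕ → ℝ) :
    ∑ m ∈ Finset.Icc 1 l, ε m • hB l m = diagonal fun i : Fin (2 * l + 1) => I * weight l ε i := by
  ext i j
  simp only [Matrix.sum_apply, hB, e, Matrix.smul_apply, Matrix.sub_apply, of_apply,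
    diagonal_apply, weight]
  split_ifs with hij
  · subst hij
    push_cast
    rw [Finset.mul_sum]
    refine Finset.sum_congr rfl fun m _ => ?_
    simp only [and_self, ← Complex.coe_smul, smul_eq_mul]
    split_ifs <;> simp [mul_comm]
  · refine Finset.sum_eq_zero fun m _ => ?_
    have : (i : ℕ) ≠ j := fun h => hij (Fin.ext h)
    rw [if_neg (by omega), if_neg (by omega)]
    simp

section weight

variable {l : ℕ} {ε : ℕ → ℝ} {m : ℕ}

lemma weight_zero : weight l ε 0 = 0 :=
  Finset.sum_eq_zero fun m hm => by
    rw [Finset.mem_Icc] at hm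
    rw [if_neg (by omega), if_neg (by omega)]
    simp

lemma weight_of_mem (hm : m ∈ Finset.Icc 1 l) : weight l ε m = ε m := by
  rw [weight, Finset.sum_eq_single m]
  · rw [Finset.mem_Icc] at hm
    rw [if_pos rfl, if_neg (by omega)]
    simp
  · intro k hk hne
    rw [Finset.mem_Icc] at hk hm
    rw [if_neg (by omega), if_neg (by omega)]
    simp
  · exact fun h => absurd hm h

lemma weight_add_of_mem (hm : m ∈ Finset.Icc 1 l) : weight l ε (m + l) = -ε m := by
  rw [weight, Finset.sum_eq_single m]
  · rw [Finset.mem_Icc] at hm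
    rw [if_neg (by omega)]
    simp
  · intro k hk hne
    rw [Finset.mem_Icc] at hk hm
    rw [if_neg (by omega), if_neg (by omega)]
    simp
  · exact fun h => absurd hm h

end weight

lemma lie_diagonal_weight_lie_diagonal_weight_yB {l : ℕ} (ε : ℕ → ℝ) {m : ℕ}
    (hm : m ∈ Finset.Icc 1 l) :
    ⁅diagonal (fun i : Fin (2 * l + 1) => I * weight l ε i),
      ⁅diagonal (fun i : Fin (2 * l + 1) => I * weight l ε i), yB l m⁆⁆ =
      (-w ε (m - 1) ^ 2) • yB l m := by
  have hm' := Finset.mem_Icc.1 hm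
  rcases eq_or_ne m 1 with rfl | hm1
  · simp only [yB, if_true, lie_sub, lie_diagonal_lie_diagonal_Y, smul_sub]
    rw [show l + 2 - 1 = 1 + l by omega, weight_zero, weight_of_mem hm, weight_add_of_mem hm]
    congr 2 <;> simp [w]
  · have hm_pred : m - 1 ∈ Finset.Icc 1 l := Finset.mem_Icc.2 ⟨by omega, by omega⟩
    simp only [yB, if_neg hm1, lie_sub, lie_diagonal_lie_diagonal_Y, smul_sub]
    rw [show m + l - 1 = m - 1 + l by omega, Nat.add_sub_cancel, Nat.add_sub_cancel,
      weight_of_mem hm, weight_of_mem hm_pred, weight_add_of_mem hm, weight_add_of_mem hm_pred,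
      w, if_neg (by omega), Nat.sub_add_cancel hm'.1]
    congr 2
    ring

lemma yB_zero_one : yB 0 1 = 0 := by
  simp [yB, Y, add_comm]

theorem y1_mem_lieSpan_so_general (l : ℕ) (ε δ : ℕ → ℝ)
    (hδ : ∀ m, 1 ≤ m → m ≤ l → δ m ≠ 0)
    (hw : ∀ m, 1 ≤ m → m ≤ l - 1 → (w ε m) ^ 2 ≠ (w ε 0) ^ 2)
    (H0 H1 : Matrix (Fin (2 * l + 1)) (Fin (2 * l + 1)) ℂ)
    (hH0 : H0 = ∑ m ∈ Finset.Icc 1 l, ε m • hB l m)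
    (hH1 : H1 = ∑ m ∈ Finset.Icc 1 l, δ m • yB l m) :
    yB l 1 ∈ LieSubalgebra.lieSpan ℝ (Matrix (Fin (2 * l + 1)) (Fin (2 * l + 1)) ℂ)
      {H0, H1} := by
  set L := LieSubalgebra.lieSpan ℝ (Matrix (Fin (2 * l + 1)) (Fin (2 * l + 1)) ℂ) {H0, H1}
  obtain rfl | hl := Nat.eq_zero_or_pos l
  · rw [yB_zero_one]
    exact L.zero_mem
  have hH0L : H0 ∈ L := LieSubalgebra.subset_lieSpan (by simp)
  have hH1L : H1 ∈ L := LieSubalgebra.subset_lieSpan (by simp)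
  have h1 : 1 ∈ Finset.Icc 1 l := Finset.mem_Icc.2 ⟨le_rfl, hl⟩
  have heig : ∀ m ∈ Finset.Icc 1 l, ⁅H0, ⁅H0, yB l m⁆⁆ = (-w ε (m - 1) ^ 2) • yB l m :=
    fun m hm => by
      rw [hH0, sum_smul_hB_eq_diagonal, lie_diagonal_weight_lie_diagonal_weight_yB ε hm]
  have hδ1 : δ 1 • yB l 1 ∈ L.toSubmodule := by
    refine Submodule.mem_of_sum_eigenvectors_mem (f := LieAlgebra.ad ℝ _ H0 ^ 2)
      (c := fun m => -w ε (m - 1) ^ 2)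
      (fun x hx => Submodule.mem_comap.2 (L.lie_mem hH0L (L.lie_mem hH0L hx)))
      (fun m hm => ?_) h1 (fun m hm hm1 => ?_) (hH1 ▸ hH1L)
    · rw [pow_two, Module.End.mul_apply, LieAlgebra.ad_apply, LieAlgebra.ad_apply, lie_smul,
        lie_smul, heig m hm, smul_comm]
    · have := Finset.mem_Icc.1 hm
      simpa using hw (m - 1) (by omega) (by omega)
  exact (L.toSubmodule.smul_mem_iff (hδ 1 le_rfl hl)).1 hδ1

/-- if `iH₀' = Σ ε_m h_m`, `iH₁ = Σ δ_m y_m` in the `so(2ℓ+1)`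
basis with all `ε_m, δ_m` nonzero and `ω_m² ≠ ω₀²` for `1 ≤ m ≤ ℓ-1`, then the
real Lie algebra generated by `iH₀'` and `iH₁` contains `y₁`. -/
theorem y1_mem_lieSpan_so (l : ℕ) (ε δ : ℕ → ℝ)
    (hε : ∀ m, 1 ≤ m → m ≤ l → ε m ≠ 0) (hδ : ∀ m, 1 ≤ m → m ≤ l → δ m ≠ 0)
    (hw : ∀ m, 1 ≤ m → m ≤ l - 1 → (w ε m) ^ 2 ≠ (w ε 0) ^ 2)
    (H0 H1 : Matrix (Fin (2 * l + 1)) (Fin (2 * l + 1)) ℂ)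
    (hH0 : H0 = ∑ m ∈ Finset.Icc 1 l, ε m • hB l m)
    (hH1 : H1 = ∑ m ∈ Finset.Icc 1 l, δ m • yB l m) :
    yB l 1 ∈ LieSubalgebra.lieSpan ℝ (Matrix (Fin (2 * l + 1)) (Fin (2 * l + 1)) ℂ)
      {H0, H1} :=
  y1_mem_lieSpan_so_general l ε δ hδ hw H0 H1 hH0 hH1
end

section
/- If the Lie algebra L generated by iH₀' = Σ ε_m h_m and iH₁ = Σ δ_m y_m in the sp(ℓ) basis (all ε_m, δ_m nonzero) contains y_ℓ, then L contains x_m, y_m, and h_m for all 1 ≤ m ≤ ℓ. -/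
open Matrix

attribute [local instance 100] LieRing.ofAssociativeRing

/-- Cartan generator of `sp(ℓ)`: `h_m = i (e_{m,m} - e_{m+ℓ,m+ℓ})`. -/
noncomputable def hC (l m : ℕ) : Matrix (Fin (2 * l)) (Fin (2 * l)) ℂ :=
  Complex.I • (e (2 * l) m m - e (2 * l) (m + l) (m + l))

/-- Generators `x_m` of `sp(ℓ)`: `x_m = x_{ε_m - ε_{m+1}}` for `m < ℓ`,
`x_ℓ = x_{2ε_ℓ} = x_{2ℓ,ℓ}`. -/
noncomputable def xC (l m : ℕ) : Matrix (Fin (2 * l)) (Fin (2 * l)) ℂ :=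
  if m = l then X (2 * l) (2 * l) l
  else X (2 * l) (m + 1) m - X (2 * l) (m + l) (m + l + 1)

/-- Generators `y_m` of `sp(ℓ)`: `y_m = y_{ε_m - ε_{m+1}}` for `m < ℓ`,
`y_ℓ = y_{2ε_ℓ} = y_{2ℓ,ℓ}`. -/
noncomputable def yC (l m : ℕ) : Matrix (Fin (2 * l)) (Fin (2 * l)) ℂ :=
  if m = l then Y (2 * l) (2 * l) l
  else Y (2 * l) (m + 1) m - Y (2 * l) (m + l) (m + l + 1)

/-!
The `x_j, y_j` are root vectors: `⁅h_a, y_j⁆ = α_j(h_a) x_j` and `⁅h_a, x_j⁆ = -α_j(h_a) y_j`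
for the simple roots `α_j`, while `⁅x_j, y_j⁆` is `2 h_{j+1} - 2 h_j` for `j < ℓ` and `-2 h_ℓ`
for `j = ℓ`. Since `α_ℓ(h_a)` vanishes for `a ≠ ℓ`, bracketing `y_ℓ` with `iH₀'` gives
`2 ε_ℓ x_ℓ`, and then `⁅x_ℓ, y_ℓ⁆` gives `h_ℓ`. Downwards, once `x_{k+1}` and `h_{k+1}` lie in
`L`, the bracket `⁅h_{k+1}, iH₁⁆ = -δ_k x_k + c x_{k+1}` only sees `y_k` and `y_{k+1}`, so
`x_k ∈ L`; then `y_k = ⁅h_{k+1}, x_k⁆` and `h_k = h_{k+1} - ½ ⁅x_k, y_k⁆`.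
-/

section MatrixUnits

variable {N : ℕ}

lemma e_mul_e_of_ne {b c : ℕ} (a d : ℕ) (h : b ≠ c) : e N a b * e N c d = 0 := by
  ext i j
  simp only [Matrix.mul_apply, e, Matrix.of_apply, Matrix.zero_apply, mul_ite, mul_one, mul_zero]
  refine Finset.sum_eq_zero fun k _ => ?_
  split_ifs <;> first | rfl | omega

lemma e_mul_e {b : ℕ} (a d : ℕ) (hb : 1 ≤ b) (hbN : b ≤ N) :
    e N a b * e N b d = e N a d := by
  ext i j
  simp only [Matrix.mul_apply, e, Matrix.of_apply, mul_ite, mul_one, mul_zero]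
  rw [Finset.sum_eq_single (⟨b - 1, by omega⟩ : Fin N)]
  · by_cases hi : (i : ℕ) + 1 = a <;> simp [Nat.sub_add_cancel hb, hi]
  · intro k _ hk
    have : (k : ℕ) + 1 ≠ b := fun h => hk (Fin.ext (by simp; omega))
    simp [this]
  · simp

lemma e_diag_mul {a : ℕ} (c d : ℕ) (ha : 1 ≤ a) (haN : a ≤ N) :
    e N a a * e N c d = if c = a then e N a d else 0 := by
  split_ifs with h
  · rw [h, e_mul_e _ _ ha haN]
  · exact e_mul_e_of_ne _ _ (Ne.symm h)

lemma e_mul_diag {a : ℕ} (c d : ℕ) (ha : 1 ≤ a) (haN : a ≤ N) :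
    e N c d * e N a a = if d = a then e N c a else 0 := by
  split_ifs with h
  · rw [h, e_mul_e _ _ ha haN]
  · exact e_mul_e_of_ne _ _ h

lemma lie_e_e_of_ne {a b c d : ℕ} (hbc : b ≠ c) (hda : d ≠ a) :
    ⁅e N a b, e N c d⁆ = 0 := by
  rw [Ring.lie_def, e_mul_e_of_ne _ _ hbc, e_mul_e_of_ne _ _ hda, sub_zero]

lemma lie_e_e_swap {a b : ℕ} (ha : 1 ≤ a) (haN : a ≤ N) (hb : 1 ≤ b) (hbN : b ≤ N) :
    ⁅e N a b, e N b a⁆ = e N a a - e N b b := by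
  rw [Ring.lie_def, e_mul_e _ _ hb hbN, e_mul_e _ _ ha haN]

lemma lie_X_Y {a b : ℕ} (ha : 1 ≤ a) (haN : a ≤ N) (hb : 1 ≤ b) (hbN : b ≤ N) :
    ⁅X N a b, Y N a b⁆ = (2 : ℝ) • Complex.I • (e N a a - e N b b) := by
  rw [X, Y, lie_smul, sub_lie, lie_add, lie_add, lie_self, lie_self,
    lie_e_e_swap ha haN hb hbN, lie_e_e_swap hb hbN ha haN]
  module

lemma lie_X_Y_of_disjoint {a b c d : ℕ} (hac : a ≠ c) (had : a ≠ d) (hbc : b ≠ c)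
    (hbd : b ≠ d) : ⁅X N a b, Y N c d⁆ = 0 := by
  rw [X, Y, lie_smul, sub_lie, lie_add, lie_add, lie_e_e_of_ne hbc had.symm,
    lie_e_e_of_ne hbd hac.symm, lie_e_e_of_ne hac hbd.symm, lie_e_e_of_ne had hbc.symm]
  simp

end MatrixUnits

/-- `h_a` acts on the standard basis vector `e_c` of `ℂ^{2ℓ}` as multiplication by
`i * hWeight l a c`. -/
def hWeight (l a c : ℕ) : ℝ := (if c = a then 1 else 0) - (if c = a + l then 1 else 0)

/-- The simple root `α_j` (`ε_j - ε_{j+1}` for `j < ℓ`, `2 ε_ℓ` for `j = ℓ`) evaluated at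
`-i h_a`. -/
def rootCoeff (l j a : ℕ) : ℝ :=
  if j = l then 2 * (if a = l then 1 else 0)
  else (if a = j then 1 else 0) - (if a = j + 1 then 1 else 0)

lemma rootCoeff_eq_zero {l j a : ℕ} (h₁ : a ≠ j) (h₂ : a ≠ j + 1) : rootCoeff l j a = 0 := by
  unfold rootCoeff
  split_ifs <;> first | omega | norm_num

lemma rootCoeff_succ_of_lt {l j : ℕ} (hjl : j < l) : rootCoeff l j (j + 1) = -1 := by
  simp [rootCoeff, hjl.ne]

section Cartan

variable {l a : ℕ}

lemma hC_lie_e (ha : 1 ≤ a) (hal : a ≤ l) (c d : ℕ) :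
    ⁅hC l a, e (2 * l) c d⁆ = (hWeight l a c - hWeight l a d) • Complex.I • e (2 * l) c d := by
  rw [hC, smul_lie, Ring.lie_def, sub_mul, mul_sub, e_diag_mul _ _ ha (by omega),
    e_diag_mul _ _ (by omega : 1 ≤ a + l) (by omega), e_mul_diag _ _ ha (by omega),
    e_mul_diag _ _ (by omega : 1 ≤ a + l) (by omega), hWeight, hWeight]
  split_ifs <;> first | omega | (subst_vars; module)

lemma hC_lie_X (ha : 1 ≤ a) (hal : a ≤ l) (c d : ℕ) :
    ⁅hC l a, X (2 * l) c d⁆ = (hWeight l a c - hWeight l a d) • Y (2 * l) c d := by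
  rw [X, Y, lie_sub, hC_lie_e ha hal, hC_lie_e ha hal]
  module

lemma hC_lie_Y (ha : 1 ≤ a) (hal : a ≤ l) (c d : ℕ) :
    ⁅hC l a, Y (2 * l) c d⁆ = -(hWeight l a c - hWeight l a d) • X (2 * l) c d := by
  rw [X, Y, lie_smul, lie_add, hC_lie_e ha hal, hC_lie_e ha hal]
  simp only [smul_add, smul_comm Complex.I (_ : ℝ), smul_smul Complex.I, Complex.I_mul_I]
  module

variable {j : ℕ}

lemma hC_lie_yC (ha : 1 ≤ a) (hal : a ≤ l) (hj : 1 ≤ j) (hjl : j ≤ l) :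
    ⁅hC l a, yC l j⁆ = rootCoeff l j a • xC l j := by
  unfold xC yC
  split_ifs with hjl'
  · have hr : -(hWeight l a (2 * l) - hWeight l a l) = rootCoeff l j a := by
      simp only [hWeight, rootCoeff]; split_ifs <;> first | omega | norm_num
    rw [hC_lie_Y ha hal, hr]
  · have hr₁ : -(hWeight l a (j + 1) - hWeight l a j) = rootCoeff l j a := by
      simp only [hWeight, rootCoeff]; split_ifs <;> first | omega | norm_num
    have hr₂ : -(hWeight l a (j + l) - hWeight l a (j + l + 1)) = rootCoeff l j a := by
      simp only [hWeight, rootCoeff]; split_ifs <;> first | omega | norm_num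
    rw [lie_sub, hC_lie_Y ha hal, hC_lie_Y ha hal, hr₁, hr₂]
    module

lemma hC_lie_xC (ha : 1 ≤ a) (hal : a ≤ l) (hj : 1 ≤ j) (hjl : j ≤ l) :
    ⁅hC l a, xC l j⁆ = -rootCoeff l j a • yC l j := by
  unfold xC yC
  split_ifs with hjl'
  · have hr : hWeight l a (2 * l) - hWeight l a l = -rootCoeff l j a := by
      simp only [hWeight, rootCoeff]; split_ifs <;> first | omega | norm_num
    rw [hC_lie_X ha hal, hr]
  · have hr₁ : hWeight l a (j + 1) - hWeight l a j = -rootCoeff l j a := by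
      simp only [hWeight, rootCoeff]; split_ifs <;> first | omega | norm_num
    have hr₂ : hWeight l a (j + l) - hWeight l a (j + l + 1) = -rootCoeff l j a := by
      simp only [hWeight, rootCoeff]; split_ifs <;> first | omega | norm_num
    rw [lie_sub, hC_lie_X ha hal, hC_lie_X ha hal, hr₁, hr₂]
    module

end Cartan

section Sl2Triples

variable {l j : ℕ}

lemma lie_xC_yC_self (hl : 1 ≤ l) : ⁅xC l l, yC l l⁆ = (-2 : ℝ) • hC l l := by
  rw [xC, yC, if_pos rfl, if_pos rfl, lie_X_Y (by omega) le_rfl hl (by omega), hC,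
    show l + l = 2 * l by omega]
  module

lemma lie_xC_yC_of_lt (hj : 1 ≤ j) (hjl : j < l) :
    ⁅xC l j, yC l j⁆ = (2 : ℝ) • hC l (j + 1) - (2 : ℝ) • hC l j := by
  rw [xC, yC, if_neg hjl.ne, if_neg hjl.ne, sub_lie, lie_sub, lie_sub,
    lie_X_Y (by omega) (by omega) hj (by omega),
    lie_X_Y (by omega) (by omega) (by omega) (by omega),
    lie_X_Y_of_disjoint (by omega) (by omega) (by omega) (by omega),
    lie_X_Y_of_disjoint (by omega) (by omega) (by omega) (by omega), hC, hC,
    show j + 1 + l = j + l + 1 by omega]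
  module

end Sl2Triples

section Peeling

open Finset

variable {l : ℕ} {S : LieSubalgebra ℝ (Matrix (Fin (2 * l)) (Fin (2 * l)) ℂ)}

lemma sum_smul_hC_lie_yC_self (hl : 1 ≤ l) (ε : ℕ → ℝ) :
    ⁅∑ a ∈ Icc 1 l, ε a • hC l a, yC l l⁆ = (2 * ε l) • xC l l := by
  calc ⁅∑ a ∈ Icc 1 l, ε a • hC l a, yC l l⁆
      = ∑ a ∈ Icc 1 l, (ε a * rootCoeff l l a) • xC l l := by
        rw [sum_lie]
        refine sum_congr rfl fun a ha => ?_
        obtain ⟨ha₁, hal⟩ := mem_Icc.mp ha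
        rw [smul_lie, hC_lie_yC ha₁ hal hl le_rfl, smul_smul]
    _ = (2 * ε l) • xC l l := by
        rw [← sum_smul]
        simp [rootCoeff, mul_comm, hl]

lemma hC_succ_lie_sum_smul_yC {k : ℕ} (hk : 1 ≤ k) (hkl : k < l) (δ : ℕ → ℝ) :
    ⁅hC l (k + 1), ∑ j ∈ Icc 1 l, δ j • yC l j⁆ =
      -δ k • xC l k + (δ (k + 1) * rootCoeff l (k + 1) (k + 1)) • xC l (k + 1) := by
  rw [lie_sum, sum_eq_add_of_mem k (k + 1) (mem_Icc.mpr ⟨hk, hkl.le⟩)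
    (mem_Icc.mpr ⟨by omega, hkl⟩) (by omega)]
  · rw [lie_smul, lie_smul, hC_lie_yC (by omega) hkl hk hkl.le, rootCoeff_succ_of_lt hkl,
      hC_lie_yC (by omega) hkl (by omega) hkl, smul_smul]
    module
  · intro j hj hjk
    obtain ⟨hj₁, hjl⟩ := mem_Icc.mp hj
    rw [lie_smul, hC_lie_yC (by omega) hkl hj₁ hjl, rootCoeff_eq_zero (by omega) (by omega),
      zero_smul, smul_zero]

lemma xC_hC_mem_of_yC_mem (hl : 1 ≤ l) {ε : ℕ → ℝ} (hε : ε l ≠ 0)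
    (hH₀ : ∑ a ∈ Icc 1 l, ε a • hC l a ∈ S) (hy : yC l l ∈ S) :
    xC l l ∈ S ∧ hC l l ∈ S := by
  have hx : xC l l ∈ S := by
    have hx_eq : xC l l = (2 * ε l)⁻¹ • ⁅∑ a ∈ Icc 1 l, ε a • hC l a, yC l l⁆ := by
      rw [sum_smul_hC_lie_yC_self hl, inv_smul_smul₀ (mul_ne_zero two_ne_zero hε)]
    rw [hx_eq]
    exact S.smul_mem _ (S.lie_mem hH₀ hy)
  have hh_eq : hC l l = (-2 : ℝ)⁻¹ • ⁅xC l l, yC l l⁆ := by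
    rw [lie_xC_yC_self hl, inv_smul_smul₀ (by norm_num)]
  exact ⟨hx, hh_eq ▸ S.smul_mem _ (S.lie_mem hx hy)⟩

lemma triple_mem_of_succ {k : ℕ} (hk : 1 ≤ k) (hkl : k < l) {δ : ℕ → ℝ} (hδ : δ k ≠ 0)
    (hH₁ : ∑ j ∈ Icc 1 l, δ j • yC l j ∈ S) (hx : xC l (k + 1) ∈ S)
    (hh : hC l (k + 1) ∈ S) :
    xC l k ∈ S ∧ yC l k ∈ S ∧ hC l k ∈ S := by
  have hxk : xC l k ∈ S := by
    set c := δ (k + 1) * rootCoeff l (k + 1) (k + 1)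
    have hx_eq : xC l k =
        (-δ k)⁻¹ • (⁅hC l (k + 1), ∑ j ∈ Icc 1 l, δ j • yC l j⁆ - c • xC l (k + 1)) := by
      rw [hC_succ_lie_sum_smul_yC hk hkl, add_sub_cancel_right,
        inv_smul_smul₀ (neg_ne_zero.mpr hδ)]
    rw [hx_eq]
    exact S.smul_mem _ (sub_mem (S.lie_mem hh hH₁) (S.smul_mem _ hx))
  have hyk : yC l k ∈ S := by
    have hy_eq : yC l k = ⁅hC l (k + 1), xC l k⁆ := by
      rw [hC_lie_xC (by omega) hkl hk hkl.le, rootCoeff_succ_of_lt hkl, neg_neg, one_smul]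
    exact hy_eq ▸ S.lie_mem hh hxk
  have hh_eq : hC l k = hC l (k + 1) - (2 : ℝ)⁻¹ • ⁅xC l k, yC l k⁆ := by
    rw [lie_xC_yC_of_lt hk hkl]
    module
  exact ⟨hxk, hyk, hh_eq ▸ sub_mem hh (S.smul_mem _ (S.lie_mem hxk hyk))⟩

end Peeling

/-- Lemma C: if the Lie algebra `L` generated by
`iH₀' = Σ ε_m h_m` and `iH₁ = Σ δ_m y_m` in the `sp(ℓ)` basis (all
`ε_m, δ_m` nonzero) contains `y_ℓ`, then `L` contains `x_m`, `y_m` and `h_m`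
for all `1 ≤ m ≤ ℓ`. -/
theorem lemma_sp (l : ℕ) (ε δ : ℕ → ℝ)
    (hε : ∀ m, 1 ≤ m → m ≤ l → ε m ≠ 0) (hδ : ∀ m, 1 ≤ m → m ≤ l → δ m ≠ 0)
    (H0 H1 : Matrix (Fin (2 * l)) (Fin (2 * l)) ℂ)
    (hH0 : H0 = ∑ m ∈ Finset.Icc 1 l, ε m • hC l m)
    (hH1 : H1 = ∑ m ∈ Finset.Icc 1 l, δ m • yC l m)
    (hyl : yC l l ∈ LieSubalgebra.lieSpan ℝ
      (Matrix (Fin (2 * l)) (Fin (2 * l)) ℂ) {H0, H1}) :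
    ∀ m, 1 ≤ m → m ≤ l →
      xC l m ∈ LieSubalgebra.lieSpan ℝ (Matrix (Fin (2 * l)) (Fin (2 * l)) ℂ)
          {H0, H1} ∧
      yC l m ∈ LieSubalgebra.lieSpan ℝ (Matrix (Fin (2 * l)) (Fin (2 * l)) ℂ)
          {H0, H1} ∧
      hC l m ∈ LieSubalgebra.lieSpan ℝ (Matrix (Fin (2 * l)) (Fin (2 * l)) ℂ)
          {H0, H1} := by
  intro m hm hml
  set S := LieSubalgebra.lieSpan ℝ (Matrix (Fin (2 * l)) (Fin (2 * l)) ℂ) {H0, H1}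
  have hH0S : H0 ∈ S := LieSubalgebra.subset_lieSpan (Set.mem_insert _ _)
  have hH1S : H1 ∈ S := LieSubalgebra.subset_lieSpan (Set.mem_insert_of_mem _ rfl)
  subst hH0 hH1
  have hl : 1 ≤ l := hm.trans hml
  obtain ⟨hxl, hhl⟩ := xC_hC_mem_of_yC_mem hl (hε l hl le_rfl) hH0S hyl
  refine Nat.decreasingInduction' (fun k hkl hmk ih => ?_) hml ⟨hxl, hyl, hhl⟩
  exact triple_mem_of_succ (hm.trans hmk) hkl (hδ k (hm.trans hmk) hkl.le) hH1S ih.1 ih.2.2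
end
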